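/- arXiv:1511.03697 — 4 statements merged into one kernel-verified Lean document; each statement's English description precedes it below -/
import Mathlib

section
/- Let R be a commutative ring, R[X] = R[X_1,…,X_n] with augmentation ideal I_0 = (X_1,…,X_n), and let I ⊂ R[X] be an ideal generated by a regular sequence (f_1,…,f_n) of length n with all f_ν ∈ I_0. Then I/(I·I_0) ≅ I ⊗_{R[X]} R is a free R-module of rank n (with basis the classes of f_1,…,f_n), where R = R[X]/I_0 via X_ν ↦ 0. -/
/-!
Every relation `∑ g ν * f ν = 0` among a weakly regular sequence has all its coefficients in
`I = (f_1, …, f_n)`: regularity of the last element puts its coefficient into the ideal of the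
earlier ones, and absorbing that into the other coefficients leaves a relation among a shorter
sequence. If now `∑ C (a ν) * f ν ∈ I * I₀`, writing it as `∑ q ν * f ν` with `q ν ∈ I₀` gives the
relation with coefficients `C (a ν) - q ν`, so `C (a ν) ∈ I + I₀ = I₀` and `a ν = 0`. Conversely an
element `∑ c ν * f ν` of `I` is congruent modulo `I * I₀` to `∑ C (a ν) * f ν`, where `a ν` is the
constant term of `c ν`.
-/

open MvPolynomial

def IsWeaklyRegularFamily {A : Type*} [CommRing A] {m : ℕ} (f : Fin m → A) : Prop :=
  ∀ (i : Fin m) (a : A), f i * a ∈ Ideal.span (f '' {j | j < i}) → a ∈ Ideal.span (f '' {j | j < i})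

namespace IsWeaklyRegularFamily

variable {A : Type*} [CommRing A]

theorem comp_castSucc {m : ℕ} {f : Fin (m + 1) → A} (hf : IsWeaklyRegularFamily f) :
    IsWeaklyRegularFamily (f ∘ Fin.castSucc) := by
  intro i a
  have himg : (f ∘ Fin.castSucc) '' {j | j < i} = f '' {j | j < i.castSucc} := by
    rw [Set.image_comp]
    exact congrArg _ (Fin.image_castSucc_Iio i)
  rw [himg]
  exact hf _ a

theorem mem_span_of_sum_mul_eq_zero {m : ℕ} {f : Fin m → A} (hf : IsWeaklyRegularFamily f)
    {g : Fin m → A} (hg : ∑ ν, g ν * f ν = 0) (ν : Fin m) :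
    g ν ∈ Ideal.span (Set.range f) := by
  induction m with
  | zero => exact ν.elim0
  | succ m ih =>
    set f' := f ∘ Fin.castSucc
    have hprev : f '' {j | j < Fin.last m} = Set.range f' := by
      rw [Set.range_comp, Fin.range_castSucc]
      rfl
    rw [Fin.sum_univ_castSucc] at hg
    have hlast : g (Fin.last m) ∈ Ideal.span (Set.range f') := by
      rw [← hprev]
      refine hf _ _ ?_
      rw [hprev, mul_comm, eq_neg_of_add_eq_zero_right hg]
      exact neg_mem (Ideal.sum_mem _ fun i _ => Ideal.mul_mem_left _ _ (Ideal.subset_span ⟨i, rfl⟩))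
    obtain ⟨l, hl⟩ := Ideal.mem_span_range_iff_exists_fun.mp hlast
    have hrel : ∑ i, (g i.castSucc + l i * f (Fin.last m)) * f' i = 0 := by
      rw [← hl, Finset.sum_mul, ← Finset.sum_add_distrib] at hg
      simpa only [add_mul, mul_right_comm _ (f (Fin.last m)), f', Function.comp_apply] using hg
    have hle : Ideal.span (Set.range f') ≤ Ideal.span (Set.range f) :=
      Ideal.span_mono (Set.range_comp_subset_range _ _)
    induction ν using Fin.lastCases with
    | last => exact hle hlast
    | cast i =>
      rw [← add_sub_cancel_right (g i.castSucc) (l i * f (Fin.last m))]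
      exact sub_mem (hle (ih hf.comp_castSucc hrel i))
        (Ideal.mul_mem_left _ _ (Ideal.subset_span ⟨_, rfl⟩))

theorem mem_of_sum_mul_mem_span_mul {m : ℕ} {f : Fin m → A} (hf : IsWeaklyRegularFamily f)
    {I₀ : Ideal A} (hfI₀ : ∀ ν, f ν ∈ I₀) {g : Fin m → A}
    (hg : ∑ ν, g ν * f ν ∈ Ideal.span (Set.range f) * I₀) (ν : Fin m) :
    g ν ∈ I₀ := by
  rw [mul_comm, ← Ideal.smul_eq_mul, Submodule.mem_ideal_smul_span_iff_exists_sum] at hg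
  obtain ⟨q, hqI₀, hq⟩ := hg
  rw [Finsupp.sum_fintype q (fun i c => c • f i) fun _ => zero_smul _ _] at hq
  have hrel : ∑ ν, (g ν - q ν) * f ν = 0 := by
    simp only [smul_eq_mul] at hq
    simp only [sub_mul, Finset.sum_sub_distrib, hq, sub_self]
  have hspan : Ideal.span (Set.range f) ≤ I₀ := Ideal.span_le.mpr (Set.range_subset_iff.mpr hfI₀)
  rw [← sub_add_cancel (g ν) (q ν)]
  exact add_mem (hspan (hf.mem_span_of_sum_mul_eq_zero hrel ν)) (hqI₀ ν)

end IsWeaklyRegularFamily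

namespace MvPolynomial

variable {σ R : Type*} [CommRing R]

theorem mem_idealOfVars_iff (p : MvPolynomial σ R) :
    p ∈ idealOfVars σ R ↔ constantCoeff p = 0 := by
  simpa [constantCoeff_eq, Finsupp.degree_eq_zero_iff] using mem_pow_idealOfVars_iff' 1 p

theorem exists_sub_sum_C_mul_mem_span_mul_idealOfVars {ι : Type*} [Fintype ι]
    {f : ι → MvPolynomial σ R} {p : MvPolynomial σ R} (hp : p ∈ Ideal.span (Set.range f)) :
    ∃ a : ι → R, p - ∑ ν, C (a ν) * f ν ∈ Ideal.span (Set.range f) * idealOfVars σ R := by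
  obtain ⟨c, rfl⟩ := Ideal.mem_span_range_iff_exists_fun.mp hp
  refine ⟨fun ν => constantCoeff (c ν), ?_⟩
  rw [← Finset.sum_sub_distrib]
  refine Ideal.sum_mem _ fun ν _ => ?_
  rw [← sub_mul]
  exact Ideal.mul_mem_mul_rev (Ideal.subset_span ⟨ν, rfl⟩) ((mem_idealOfVars_iff _).mpr (by simp))

end MvPolynomial

/-- Let `R` be a commutative ring, `R[X] = R[X_1,…,X_n]` with augmentation ideal
`I₀ = (X_1,…,X_n)`, and let `I ⊆ R[X]` be an ideal generated by a regular sequence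
`(f_1,…,f_n)` of length `n` with all `f_ν ∈ I₀`. Then `I/(I·I₀) ≅ I ⊗_{R[X]} R` is a free
`R`-module of rank `n` with basis the classes of the `f_ν`: equivalently, the map
`R^n → R[X]/(I·I₀)`, `a ↦ ∑ a_ν f_ν mod I·I₀`, is injective and its image is exactly the
image of `I` in `R[X]/(I·I₀)`. -/
theorem stmt4 (R : Type*) [CommRing R] (n : ℕ) (f : Fin n → MvPolynomial (Fin n) R)
    (hreg : ∀ (i : Fin n) (a : MvPolynomial (Fin n) R),
      f i * a ∈ Ideal.span (f '' {j | j < i}) → a ∈ Ideal.span (f '' {j | j < i}))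
    (hf0 : ∀ ν, f ν ∈ Ideal.span (Set.range (X : Fin n → MvPolynomial (Fin n) R))) :
    Function.Injective (fun a : Fin n → R =>
      Ideal.Quotient.mk
        (Ideal.span (Set.range f) * Ideal.span (Set.range (X : Fin n → MvPolynomial (Fin n) R)))
        (∑ ν, C (a ν) * f ν)) ∧
    Set.range (fun a : Fin n → R =>
      Ideal.Quotient.mk
        (Ideal.span (Set.range f) * Ideal.span (Set.range (X : Fin n → MvPolynomial (Fin n) R)))
        (∑ ν, C (a ν) * f ν)) =
      (Ideal.Quotient.mk
        (Ideal.span (Set.range f) * Ideal.span (Set.range (X : Fin n → MvPolynomial (Fin n) R))))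
        '' (Ideal.span (Set.range f)) := by
  constructor
  · intro a b hab
    rw [Ideal.Quotient.eq, ← Finset.sum_sub_distrib] at hab
    simp_rw [← sub_mul, ← map_sub] at hab
    funext ν
    simpa [mem_idealOfVars_iff, sub_eq_zero] using
      IsWeaklyRegularFamily.mem_of_sum_mul_mem_span_mul hreg hf0 hab ν
  · ext x
    constructor
    · rintro ⟨a, rfl⟩
      exact ⟨_, Ideal.sum_mem _ fun ν _ => Ideal.mul_mem_left _ _ (Ideal.subset_span ⟨ν, rfl⟩), rfl⟩
    · rintro ⟨p, hp, rfl⟩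
      obtain ⟨a, ha⟩ := exists_sub_sum_C_mul_mem_span_mul_idealOfVars hp
      exact ⟨a, Ideal.Quotient.eq.mpr (neg_sub p _ ▸ neg_mem ha)⟩
end

section
/- Let k be a field, n ≥ 1, A = k[z]/(z^n), and M an A-module. Then M is a flat A-module if and only if ker(z^{n−i} : M → M) = z^i·M for all i = 0, …, n. -/
/-!
Flatness over `A` may be tested on the maps `I ⊗ M → M` for ideals `I`. For `A = R ⧸ (p ^ n)`
with `R` a principal ideal domain and `p` prime, every ideal is `(z ^ j)` with `z` the image
of `p`, and `(z ^ j) ≅ A ⧸ ann (z ^ j) = A ⧸ (z ^ (n - j))`. Hence `(z ^ j) ⊗ M ≅ M ⧸ z ^ (n - j) M`,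
the map to `M` becomes multiplication by `z ^ j`, and it is injective iff
`ker (z ^ j) ⊆ z ^ (n - j) M`; the reverse inclusion always holds since `z ^ n = 0`.
-/

open Polynomial TensorProduct

theorem Module.rTensor_span_singleton_subtype_injective_iff {R : Type*} [CommRing R]
    (M : Type*) [AddCommGroup M] [Module R M] (a : R) :
    Function.Injective ((Ideal.span {a}).subtype.rTensor M) ↔
      ∀ m : M, a • m = 0 → m ∈ Ideal.torsionOf R R a • (⊤ : Submodule R M) := by
  set T := Ideal.torsionOf R R a
  let e : (M ⧸ T • (⊤ : Submodule R M)) ≃ₗ[R] Ideal.span {a} ⊗[R] M :=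
    (quotTensorEquivQuotSMul M T).symm ≪≫ₗ (Ideal.quotTorsionOfEquivSpanSingleton R R a).rTensor M
  let φ := (TensorProduct.lid R M).toLinearMap ∘ₗ (Ideal.span {a}).subtype.rTensor M ∘ₗ
    e.toLinearMap
  have hφ (m : M) : φ (Submodule.Quotient.mk m) = a • m := by
    have h1 : (Ideal.quotTorsionOfEquivSpanSingleton R R a 1 : R) = a := by
      simpa using congrArg Subtype.val (Ideal.quotTorsionOfEquivSpanSingleton_apply_mk a (1 : R))
    simp [φ, e, quotTensorEquivQuotSMul_symm_mk, h1]
  have : Function.Injective ((Ideal.span {a}).subtype.rTensor M) ↔ Function.Injective φ := by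
    simp only [φ, LinearMap.coe_comp, LinearEquiv.coe_coe, EquivLike.injective_comp,
      EquivLike.comp_injective]
  rw [this, injective_iff_map_eq_zero, (Submodule.Quotient.mk_surjective _).forall]
  simp only [hφ, Submodule.Quotient.mk_eq_zero]

theorem Module.flat_iff_of_forall_ideal_eq_span_singleton {R : Type*} [CommRing R]
    (M : Type*) [AddCommGroup M] [Module R M] {S : Set R}
    (hS : ∀ I : Ideal R, ∃ a ∈ S, I = Ideal.span {a}) :
    Module.Flat R M ↔
      ∀ a ∈ S, ∀ m : M, a • m = 0 → m ∈ Ideal.torsionOf R R a • (⊤ : Submodule R M) := by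
  rw [Module.Flat.iff_rTensor_injective']
  refine ⟨fun h a _ => (rTensor_span_singleton_subtype_injective_iff M a).mp (h _), fun h I => ?_⟩
  obtain ⟨a, ha, rfl⟩ := hS I
  exact (rTensor_span_singleton_subtype_injective_iff M a).mpr (h a ha)

theorem Ideal.Quotient.mk_mem_span_singleton_mk_iff {R : Type*} [CommRing R] {a q : R}
    (hq : q ∣ a) (f : R) :
    Ideal.Quotient.mk (Ideal.span {a}) f ∈ Ideal.span {Ideal.Quotient.mk (Ideal.span {a}) q} ↔
      q ∣ f := by
  rw [← Set.image_singleton, ← Ideal.map_span, ← Ideal.mem_comap,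
    Ideal.comap_map_of_surjective' _ Ideal.Quotient.mk_surjective, Ideal.mk_ker,
    sup_eq_left.mpr (Ideal.span_singleton_le_span_singleton.mpr hq), Ideal.mem_span_singleton]

section PrimePowerQuotient

variable {R : Type*} [CommRing R] [IsDomain R] {p : R} (hp : Prime p) {n : ℕ}

local notation "π" => Ideal.Quotient.mk (Ideal.span {p ^ n})

include hp in
theorem Ideal.torsionOf_mk_prime_pow {j : ℕ} (hj : j ≤ n) :
    Ideal.torsionOf (R ⧸ Ideal.span {p ^ n}) (R ⧸ Ideal.span {p ^ n}) (π p ^ j) =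
      Ideal.span {π p ^ (n - j)} := by
  ext a
  obtain ⟨f, rfl⟩ := Ideal.Quotient.mk_surjective a
  have hpow : p ^ n = p ^ (n - j) * p ^ j := by rw [← pow_add, Nat.sub_add_cancel hj]
  rw [Ideal.mem_torsionOf_iff, smul_eq_mul, ← map_pow, ← map_pow, ← map_mul,
    Ideal.Quotient.mk_mem_span_singleton_mk_iff (pow_dvd_pow p (Nat.sub_le n j)),
    Ideal.Quotient.eq_zero_iff_mem, Ideal.mem_span_singleton, hpow,
    mul_dvd_mul_iff_right (pow_ne_zero j hp.ne_zero)]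

include hp in
theorem Ideal.exists_eq_span_mk_prime_pow [IsPrincipalIdealRing R]
    (I : Ideal (R ⧸ Ideal.span {p ^ n})) : ∃ j ≤ n, I = Ideal.span {π p ^ j} := by
  obtain ⟨q, hq⟩ := (IsPrincipalIdealRing.principal (I.comap π)).principal
  have hqn : q ∣ p ^ n := by
    rw [← Ideal.mem_span_singleton, ← Ideal.submodule_span_eq, ← hq, Ideal.mem_comap,
      Ideal.Quotient.mk_singleton_self]
    exact I.zero_mem
  obtain ⟨j, hj, hqj⟩ := (dvd_prime_pow hp n).mp hqn
  refine ⟨j, hj, ?_⟩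
  rw [← Ideal.map_comap_of_surjective π Ideal.Quotient.mk_surjective I, hq,
    Ideal.submodule_span_eq, Ideal.span_singleton_eq_span_singleton.mpr hqj, Ideal.map_span,
    Set.image_singleton, map_pow]

include hp in
theorem Module.flat_quotient_prime_pow_iff [IsPrincipalIdealRing R] (M : Type*)
    [AddCommGroup M] [Module (R ⧸ Ideal.span {p ^ n}) M] :
    Module.Flat (R ⧸ Ideal.span {p ^ n}) M ↔
      ∀ i ≤ n, ∀ m : M, π p ^ (n - i) • m = 0 ↔ ∃ m' : M, m = π p ^ i • m' := by
  have hS (I : Ideal (R ⧸ Ideal.span {p ^ n})) :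
      ∃ a ∈ (fun i => π p ^ (n - i)) '' Set.Iic n, I = Ideal.span {a} := by
    obtain ⟨j, hj, rfl⟩ := Ideal.exists_eq_span_mk_prime_pow hp I
    exact ⟨_, ⟨n - j, Nat.sub_le n j, rfl⟩, by simp only [Nat.sub_sub_self hj]⟩
  rw [Module.flat_iff_of_forall_ideal_eq_span_singleton M hS, Set.forall_mem_image]
  refine forall₂_congr fun i hi => forall_congr' fun m => ?_
  rw [Ideal.torsionOf_mk_prime_pow hp (n.sub_le i), Nat.sub_sub_self hi,
    Submodule.ideal_span_singleton_smul, Submodule.mem_smul_pointwise_iff_exists]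
  have hzero (m' : M) : π p ^ (n - i) • π p ^ i • m' = 0 := by
    rw [smul_smul, ← pow_add, Nat.sub_add_cancel hi, ← map_pow, Ideal.Quotient.mk_singleton_self,
      zero_smul]
  refine ⟨fun h => ⟨fun hm => ?_, ?_⟩, fun h hm => ?_⟩
  · obtain ⟨m', -, rfl⟩ := h hm
    exact ⟨m', rfl⟩
  · rintro ⟨m', rfl⟩
    exact hzero m'
  · obtain ⟨m', rfl⟩ := h.mp hm
    exact ⟨m', trivial, rfl⟩

end PrimePowerQuotient

theorem stmt5_general (k : Type*) [Field k] (n : ℕ)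
    (M : Type*) [AddCommGroup M]
    [Module (Polynomial k ⧸ Ideal.span {(X : Polynomial k) ^ n}) M] :
    Module.Flat (Polynomial k ⧸ Ideal.span {(X : Polynomial k) ^ n}) M ↔
      ∀ i ≤ n, ∀ m : M,
        (Ideal.Quotient.mk (Ideal.span {(X : Polynomial k) ^ n}) X) ^ (n - i) • m = 0 ↔
        ∃ m' : M, m =
          (Ideal.Quotient.mk (Ideal.span {(X : Polynomial k) ^ n}) X) ^ i • m' :=
  Module.flat_quotient_prime_pow_iff Polynomial.prime_X M

/-- Let `k` be a field, `n ≥ 1`, `A = k[z]/(z^n)`, and `M` an `A`-module. Then `M` is a flat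
`A`-module if and only if `ker(z^{n−i} : M → M) = z^i·M` for all `i = 0, …, n`. -/
theorem stmt5 (k : Type*) [Field k] (n : ℕ) (hn : 1 ≤ n)
    (M : Type*) [AddCommGroup M]
    [Module (Polynomial k ⧸ Ideal.span {(X : Polynomial k) ^ n}) M] :
    Module.Flat (Polynomial k ⧸ Ideal.span {(X : Polynomial k) ^ n}) M ↔
      ∀ i ≤ n, ∀ m : M,
        (Ideal.Quotient.mk (Ideal.span {(X : Polynomial k) ^ n}) X) ^ (n - i) • m = 0 ↔
        ∃ m' : M, m =
          (Ideal.Quotient.mk (Ideal.span {(X : Polynomial k) ^ n}) X) ^ i • m' :=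
  stmt5_general k n M
end

section
/- Let L be a perfect field of characteristic p, q a power of p, M a finite-dimensional L-vector space, and f : M → M additive with f(λm) = λ^q·f(m) for all λ ∈ L, m ∈ M. Then M decomposes canonically as M = M_ét ⊕ M_nil where M_ét = im(f^{dim M}) is f-stable with f|_{M_ét} bijective, and M_nil = ∪_n ker(f^n) is f-stable with f|_{M_nil} nilpotent. -/
/-!
Since `f` is `q`-semilinear, the kernels of the iterates `fⁿ` are `L`-subspaces, and so are their
images because `L` is perfect. The kernels increase and the images decrease, so each chain has a
repetition within `dim M` steps, and for iterates a single repetition makes the chain constant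
from then on. With `d = dim M` we thus have `ker f^{d+1} = ker f^d` and `im f^{d+1} = im f^d`,
and Fitting's argument, which only uses additivity, yields the decomposition.
-/

open Function Set

theorem Nat.exists_eq_succ_of_monotone {g : ℕ → ℕ} (hg : Monotone g) {B : ℕ}
    (hB : g (B + 1) ≤ B + g 0) : ∃ n ≤ B, g n = g (n + 1) := by
  by_contra! hne
  have hgrow : ∀ n ≤ B + 1, n + g 0 ≤ g n := by
    intro n hn
    induction n with
    | zero => simp
    | succ n ih =>
      have := lt_of_le_of_ne (hg (by omega : n ≤ n + 1)) (hne n (by omega))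
      have := ih (by omega)
      omega
  have := hgrow (B + 1) le_rfl
  omega

namespace Function

variable {α : Type*} (g : α → α)

theorem range_iterate_antitone : Antitone fun n ↦ range g^[n] := by
  intro m n hmn
  obtain ⟨j, rfl⟩ := Nat.exists_eq_add_of_le hmn
  simp only [iterate_add, range_comp]
  exact image_subset_range _ _

theorem range_iterate_subset_of_subset_succ {n : ℕ} (hn : range g^[n] ⊆ range g^[n + 1])
    {m : ℕ} (hm : n ≤ m) (m' : ℕ) : range g^[m] ⊆ range g^[m'] := by
  have hstable : ∀ j, range g^[n] ⊆ range g^[j + n] := by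
    intro j
    induction j with
    | zero => simp
    | succ j ih =>
      calc range g^[n] ⊆ range g^[j + n] := ih
        _ = g^[j] '' range g^[n] := by rw [iterate_add, range_comp]
        _ ⊆ g^[j] '' range g^[n + 1] := image_mono hn
        _ = range g^[j + 1 + n] := by
          rw [← range_comp, ← iterate_add, add_right_comm, add_assoc]
  calc range g^[m] ⊆ range g^[n] := range_iterate_antitone g hm
    _ ⊆ range g^[m' + n] := hstable m'
    _ ⊆ range g^[m'] := range_iterate_antitone g (Nat.le_add_right m' n)

end Function

section Fitting

variable {M F : Type*} [AddCommGroup M] [FunLike F M M] [AddMonoidHomClass F M M] (f : F)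

theorem iterate_eq_zero_of_le {m n : ℕ} (h : m ≤ n) {x : M} (hx : f^[m] x = 0) :
    f^[n] x = 0 := by
  obtain ⟨j, rfl⟩ := Nat.exists_eq_add_of_le h
  rw [add_comm, iterate_add_apply, hx, iterate_map_zero]

theorem iterate_eq_zero_of_stable {n : ℕ} (hn : ∀ x : M, f^[n + 1] x = 0 → f^[n] x = 0)
    {m : ℕ} (hm : n ≤ m) {m' : ℕ} {x : M} (hx : f^[m'] x = 0) : f^[m] x = 0 := by
  have hstable : ∀ j (y : M), f^[n + j] y = 0 → f^[n] y = 0 := by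
    intro j
    induction j with
    | zero => exact fun _ ↦ id
    | succ j ih =>
      intro y hy
      rw [← add_assoc, add_right_comm, iterate_add_apply] at hy
      exact ih y (by rw [iterate_add_apply]; exact hn _ hy)
  refine iterate_eq_zero_of_le f hm (hstable m' x ?_)
  rw [iterate_add_apply, hx, iterate_map_zero]

theorem mapsTo_setOf_exists_iterate_eq_zero :
    MapsTo f {x : M | ∃ n, f^[n] x = 0} {x : M | ∃ n, f^[n] x = 0} := by
  rintro x ⟨n, hn⟩
  exact ⟨n, by rw [← iterate_succ_apply, iterate_succ_apply', hn, map_zero]⟩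

variable {f} {d : ℕ}

theorem range_iterate_inter_setOf_exists_iterate_eq_zero
    (hker : ∀ x : M, f^[d + 1] x = 0 → f^[d] x = 0) :
    range f^[d] ∩ {x : M | ∃ n, f^[n] x = 0} = {0} := by
  refine Subset.antisymm ?_ (singleton_subset_iff.2 ⟨⟨0, iterate_map_zero f d⟩, 0, rfl⟩)
  rintro _ ⟨⟨y, rfl⟩, n, hn⟩
  rw [← iterate_add_apply] at hn
  exact iterate_eq_zero_of_stable f hker le_rfl hn

theorem exists_add_of_range_iterate_subset (hrange : range f^[d] ⊆ range f^[d + 1]) (x : M) :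
    ∃ a ∈ range f^[d], ∃ b ∈ {x : M | ∃ n, f^[n] x = 0}, x = a + b := by
  obtain ⟨y, hy⟩ := range_iterate_subset_of_subset_succ f hrange le_rfl (d + d) ⟨x, rfl⟩
  refine ⟨f^[d] y, ⟨y, rfl⟩, x - f^[d] y, ⟨d, ?_⟩, by abel⟩
  rw [iterate_map_sub, ← iterate_add_apply, hy, sub_self]

theorem bijOn_range_iterate (hker : ∀ x : M, f^[d + 1] x = 0 → f^[d] x = 0)
    (hrange : range f^[d] ⊆ range f^[d + 1]) : BijOn f (range f^[d]) (range f^[d]) := by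
  refine ⟨?_, ?_, ?_⟩
  · rintro _ ⟨y, rfl⟩
    exact ⟨f y, by rw [← iterate_succ_apply, iterate_succ_apply']⟩
  · rintro _ ⟨y, rfl⟩ _ ⟨y', rfl⟩ hyy'
    have hmem : f^[d] (y - y') ∈ range f^[d] ∩ {x : M | ∃ n, f^[n] x = 0} :=
      ⟨⟨_, rfl⟩, 1, by rw [iterate_one, iterate_map_sub, map_sub, hyy', sub_self]⟩
    rwa [range_iterate_inter_setOf_exists_iterate_eq_zero hker, mem_singleton_iff,
      iterate_map_sub, sub_eq_zero] at hmem
  · rintro _ ⟨y, rfl⟩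
    obtain ⟨z, hz⟩ := hrange ⟨y, rfl⟩
    exact ⟨f^[d] z, ⟨z, rfl⟩, (iterate_succ_apply' f d z).symm.trans hz⟩

end Fitting

namespace Submodule

variable {K M : Type*} [DivisionRing K] [AddCommGroup M] [Module K M] [FiniteDimensional K M]
  {s : ℕ → Submodule K M}

theorem exists_eq_succ_of_monotone (hs : Monotone s) :
    ∃ n ≤ Module.finrank K M, s n = s (n + 1) := by
  obtain ⟨n, hn, heq⟩ := Nat.exists_eq_succ_of_monotone
    (g := fun n ↦ Module.finrank K (s n)) (B := Module.finrank K M)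
    (fun _ _ h ↦ finrank_mono (hs h)) (by have := finrank_le (s (Module.finrank K M + 1)); omega)
  exact ⟨n, hn, eq_of_le_of_finrank_eq (hs (Nat.le_add_right n 1)) heq⟩

theorem exists_eq_succ_of_antitone (hs : Antitone s) :
    ∃ n ≤ Module.finrank K M, s n = s (n + 1) := by
  obtain ⟨n, hn, heq⟩ := Nat.exists_eq_succ_of_monotone
    (g := fun n ↦ Module.finrank K M - Module.finrank K (s n)) (B := Module.finrank K M)
    (fun _ _ h ↦ Nat.sub_le_sub_left (finrank_mono (hs h)) _) (by omega)
  have := finrank_le (s n)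
  have := finrank_le (s (n + 1))
  exact ⟨n, hn, (eq_of_le_of_finrank_eq (hs (Nat.le_add_right n 1)) (by omega)).symm⟩

end Submodule

namespace LinearMap

variable {K M : Type*} [DivisionRing K] [AddCommGroup M] [Module K M] {σ : K →+* K}
  (f : M →ₛₗ[σ] M)

theorem iterate_map_smulₛₗ (n : ℕ) (c : K) (x : M) : f^[n] (c • x) = σ^[n] c • f^[n] x := by
  induction n generalizing c x with
  | zero => rfl
  | succ n ih =>
    rw [iterate_succ_apply, iterate_succ_apply, map_smulₛₗ, ih, iterate_succ_apply]

def kerIterate (n : ℕ) : Submodule K M where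
  carrier := {x | f^[n] x = 0}
  add_mem' {x y} hx hy := by simp_all [iterate_map_add]
  zero_mem' := iterate_map_zero f n
  smul_mem' c x hx := by simp_all [iterate_map_smulₛₗ]

def rangeIterate [RingHomSurjective σ] (n : ℕ) : Submodule K M where
  carrier := Set.range f^[n]
  add_mem' := by
    rintro _ _ ⟨x, rfl⟩ ⟨y, rfl⟩
    exact ⟨x + y, iterate_map_add f n x y⟩
  zero_mem' := ⟨0, iterate_map_zero f n⟩
  smul_mem' := by
    rintro c _ ⟨x, rfl⟩
    obtain ⟨c', rfl⟩ := (RingHomSurjective.is_surjective (σ := σ)).iterate n c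
    exact ⟨c' • x, iterate_map_smulₛₗ f n c' x⟩

theorem kerIterate_mono : Monotone f.kerIterate :=
  fun _ _ h _ ↦ iterate_eq_zero_of_le f h

theorem rangeIterate_anti [RingHomSurjective σ] : Antitone f.rangeIterate :=
  fun _ _ h ↦ range_iterate_antitone f h

variable [FiniteDimensional K M]

theorem iterate_finrank_eq_zero_of_iterate_succ_eq_zero (x : M)
    (hx : f^[Module.finrank K M + 1] x = 0) : f^[Module.finrank K M] x = 0 := by
  obtain ⟨n, hn, heq⟩ := Submodule.exists_eq_succ_of_monotone f.kerIterate_mono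
  exact iterate_eq_zero_of_stable f (fun y hy ↦ heq.ge hy) hn hx

theorem range_iterate_finrank_subset_succ [RingHomSurjective σ] :
    Set.range f^[Module.finrank K M] ⊆ Set.range f^[Module.finrank K M + 1] := by
  obtain ⟨n, hn, heq⟩ := Submodule.exists_eq_succ_of_antitone f.rangeIterate_anti
  exact range_iterate_subset_of_subset_succ f (fun y hy ↦ heq.le hy) hn _

end LinearMap

/-- Let `L` be a perfect field of characteristic `p`, `q = p^k` a power of `p`, `M` a
finite-dimensional `L`-vector space, and `f : M → M` additive with `f(λ·m) = λ^q·f(m)`.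
Then `M` decomposes canonically as `M = M_ét ⊕ M_nil`, where `M_ét = im(f^{dim M})` is
`f`-stable with `f` bijective on it, and `M_nil = ⋃ₙ ker(fⁿ)` is `f`-stable with `f`
nilpotent on it. -/
theorem stmt9 (L : Type*) [Field L] (p : ℕ) [Fact p.Prime] [CharP L p] [PerfectField L]
    (k : ℕ) (M : Type*) [AddCommGroup M] [Module L M] [FiniteDimensional L M]
    (f : M → M) (hadd : ∀ m m' : M, f (m + m') = f m + f m')
    (hsmul : ∀ (c : L) (m : M), f (c • m) = c ^ (p ^ k) • f m) :
    Set.BijOn f (Set.range (f^[Module.finrank L M])) (Set.range (f^[Module.finrank L M])) ∧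
    Set.MapsTo f {m : M | ∃ n : ℕ, f^[n] m = 0} {m : M | ∃ n : ℕ, f^[n] m = 0} ∧
    (∃ N : ℕ, ∀ m ∈ {m : M | ∃ n : ℕ, f^[n] m = 0}, f^[N] m = 0) ∧
    (∀ m : M, ∃ a ∈ Set.range (f^[Module.finrank L M]),
      ∃ b ∈ {m : M | ∃ n : ℕ, f^[n] m = 0}, m = a + b) ∧
    Set.range (f^[Module.finrank L M]) ∩ {m : M | ∃ n : ℕ, f^[n] m = 0} = {0} := by
  let F : M →ₛₗ[(iterateFrobeniusEquiv L p k : L →+* L)] M :=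
    { toFun := f, map_add' := hadd, map_smul' := hsmul }
  have hker := F.iterate_finrank_eq_zero_of_iterate_succ_eq_zero
  have hrange := F.range_iterate_finrank_subset_succ
  exact ⟨bijOn_range_iterate hker hrange, mapsTo_setOf_exists_iterate_eq_zero F,
    ⟨_, fun _ ⟨_, hx⟩ ↦ iterate_eq_zero_of_stable F hker le_rfl hx⟩,
    exists_add_of_range_iterate_subset hrange,
    range_iterate_inter_setOf_exists_iterate_eq_zero hker⟩
end

section
/- Let k be a field, A = k[z]/(z^n), and M an A-module. Suppose the natural surjections M/zM → zM/z²M → … → z^{n−1}M (induced by multiplication by z) have bijective composite M/zM ≅ z^{n−1}M. Then each of these maps is an isomorphism, the associated graded module satisfies gr^•(A) ⊗_k gr^0(M) ≅ gr^•(M), and M is flat over A. -/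
/-!
Iterating the hypothesis shows that `z^(n-t) • m = 0` forces `m ∈ z^t M`. Since every ideal of
`k[z]/(zⁿ)` is some `(zⁱ)`, flatness only needs `(zⁱ) ⊗ M → M` to be injective; every tensor there is
`zⁱ ⊗ m`, and if `zⁱ • m = 0` then `m = z^(n-i) • m'`, so `zⁱ ⊗ m = z^(n-i) zⁱ ⊗ m' = 0`.
-/

open Polynomial TensorProduct

namespace Ideal

theorem exists_eq_span_pow_of_quotient_span_prime_pow {R : Type*} [CommRing R] [IsDomain R]
    [IsPrincipalIdealRing R] {p : R} (hp : Prime p) (n : ℕ) (I : Ideal (R ⧸ span {p ^ n})) :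
    ∃ i ≤ n, I = span {Quotient.mk (span {p ^ n}) p ^ i} := by
  obtain ⟨g, hg⟩ := IsPrincipalIdealRing.principal (I.comap (Quotient.mk (span {p ^ n})))
  have hpn : p ^ n ∈ I.comap (Quotient.mk (span {p ^ n})) := by
    rw [mem_comap, Quotient.eq_zero_iff_mem.mpr (mem_span_singleton_self _)]
    exact I.zero_mem
  rw [hg, submodule_span_eq, mem_span_singleton] at hpn
  obtain ⟨i, hi, hassoc⟩ := (dvd_prime_pow hp n).mp hpn
  refine ⟨i, hi, ?_⟩
  rw [← map_comap_of_surjective _ Quotient.mk_surjective I, hg, submodule_span_eq,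
    span_singleton_eq_span_singleton.mpr hassoc, map_span, Set.image_singleton, map_pow]

end Ideal

section

variable {R M : Type*} [CommRing R] [AddCommGroup M] [Module R M]

theorem Module.Flat.rTensor_span_singleton_subtype_injective {a : R}
    (h : ∀ m : M, a • m = 0 → ∃ b m', b * a = 0 ∧ m = b • m') :
    Function.Injective ((Ideal.span {a}).subtype.rTensor M) := by
  let a' : Ideal.span {a} := ⟨a, Ideal.mem_span_singleton_self a⟩
  have hpure : ∀ x : Ideal.span {a} ⊗[R] M, ∃ m : M, x = a' ⊗ₜ m := by
    intro x
    induction x using TensorProduct.induction_on with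
    | zero => exact ⟨0, (tmul_zero _ _).symm⟩
    | tmul c m =>
      obtain ⟨r, hr⟩ := Ideal.mem_span_singleton'.mp c.2
      refine ⟨r • m, ?_⟩
      rw [← smul_tmul]
      congr 1
      ext
      simp [a', ← hr]
    | add x y hx hy =>
      obtain ⟨mx, rfl⟩ := hx
      obtain ⟨my, rfl⟩ := hy
      exact ⟨mx + my, (tmul_add _ _ _).symm⟩
  intro x y hxy
  obtain ⟨mx, rfl⟩ := hpure x
  obtain ⟨my, rfl⟩ := hpure y
  have hker : a • (mx - my) = 0 := by
    have := congrArg (TensorProduct.lid R M) hxy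
    simp only [LinearMap.rTensor_tmul, Submodule.coe_subtype, lid_tmul] at this
    rw [smul_sub, this, sub_self]
  obtain ⟨b, m', hba, hm'⟩ := h _ hker
  have hba' : b • a' = 0 := Subtype.ext hba
  rw [← sub_eq_zero, ← tmul_sub, hm', ← smul_tmul, hba', zero_tmul]

theorem Module.Flat.of_forall_ideal_eq_span_singleton
    (h : ∀ I : Ideal R, ∃ a, I = Ideal.span {a} ∧
      ∀ m : M, a • m = 0 → ∃ b m', b * a = 0 ∧ m = b • m') :
    Module.Flat R M := by
  refine Module.Flat.iff_rTensor_injective'.mpr fun I ↦ ?_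
  obtain ⟨a, rfl, ha⟩ := h I
  exact rTensor_span_singleton_subtype_injective ha

variable {z : R} {n : ℕ}

theorem exists_eq_pow_smul_of_pow_sub_smul_eq_zero
    (h : ∀ m : M, z ^ (n - 1) • m = 0 → ∃ m', m = z • m') {t : ℕ} (ht : t ≤ n) {m : M}
    (hm : z ^ (n - t) • m = 0) : ∃ m', m = z ^ t • m' := by
  induction t generalizing m with
  | zero => exact ⟨m, by rw [pow_zero, one_smul]⟩
  | succ t ih =>
    obtain ⟨m', rfl⟩ : ∃ m', m = z • m' := h m (by
      rw [show n - 1 = t + (n - (t + 1)) by omega, pow_add, mul_smul, hm, smul_zero])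
    obtain ⟨m'', rfl⟩ := ih (by omega) (m := m') (by
      rwa [show n - t = n - (t + 1) + 1 by omega, pow_succ, mul_smul])
    exact ⟨m'', by rw [pow_succ', mul_smul]⟩

theorem exists_eq_smul_of_pow_smul_eq_pow_succ_smul (hzn : z ^ n = 0)
    (h : ∀ m : M, z ^ (n - 1) • m = 0 → ∃ m', m = z • m') {i : ℕ} (hi : i < n) {m m' : M}
    (hm : z ^ i • m = z ^ (i + 1) • m') : ∃ m'', m = z • m'' := by
  refine h m ?_
  rw [show n - 1 = n - 1 - i + i by omega, pow_add, mul_smul, hm, ← mul_smul, ← pow_add,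
    show n - 1 - i + (i + 1) = n by omega, hzn, zero_smul]

theorem Module.Flat.of_pow_sub_smul_eq_zero (hzn : z ^ n = 0)
    (hideal : ∀ I : Ideal R, ∃ i ≤ n, I = Ideal.span {z ^ i})
    (h : ∀ m : M, z ^ (n - 1) • m = 0 → ∃ m', m = z • m') : Module.Flat R M := by
  refine of_forall_ideal_eq_span_singleton fun I ↦ ?_
  obtain ⟨i, hi, rfl⟩ := hideal I
  refine ⟨z ^ i, rfl, fun m hm ↦ ?_⟩
  obtain ⟨m', hm'⟩ := exists_eq_pow_smul_of_pow_sub_smul_eq_zero h (Nat.sub_le n i)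
    (by rwa [Nat.sub_sub_self hi])
  exact ⟨z ^ (n - i), m', by rw [← pow_add, Nat.sub_add_cancel hi, hzn], hm'⟩

end

theorem stmt18_general (k : Type*) [Field k] (n : ℕ) (M : Type*) [AddCommGroup M]
    [Module (Polynomial k ⧸ Ideal.span {(X : Polynomial k) ^ n}) M]
    (hcomp : ∀ m : M,
      (Ideal.Quotient.mk (Ideal.span {(X : Polynomial k) ^ n}) X) ^ (n - 1) • m = 0 →
      ∃ m' : M, m = (Ideal.Quotient.mk (Ideal.span {(X : Polynomial k) ^ n}) X) • m') :
    (∀ i < n, ∀ m : M,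
      (∃ m' : M, (Ideal.Quotient.mk (Ideal.span {(X : Polynomial k) ^ n}) X) ^ i • m =
        (Ideal.Quotient.mk (Ideal.span {(X : Polynomial k) ^ n}) X) ^ (i + 1) • m') →
      ∃ m'' : M, m = (Ideal.Quotient.mk (Ideal.span {(X : Polynomial k) ^ n}) X) • m'') ∧
    Module.Flat (Polynomial k ⧸ Ideal.span {(X : Polynomial k) ^ n}) M := by
  have hzn : Ideal.Quotient.mk (Ideal.span {(X : Polynomial k) ^ n}) X ^ n = 0 := by
    rw [← map_pow, Ideal.Quotient.eq_zero_iff_mem]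
    exact Ideal.mem_span_singleton_self _
  refine ⟨fun i hi m ⟨m', hm'⟩ ↦ exists_eq_smul_of_pow_smul_eq_pow_succ_smul hzn hcomp hi hm',
    Module.Flat.of_pow_sub_smul_eq_zero hzn ?_ hcomp⟩
  exact Ideal.exists_eq_span_pow_of_quotient_span_prime_pow Polynomial.prime_X n

/-- Let `k` be a field, `A = k[z]/(zⁿ)` with `n ≥ 1`, and `M` an `A`-module. Suppose the
composite of the natural surjections `M/zM → zM/z²M → … → z^{n−1}M` is bijective, i.e.
`z^{n−1}·m = 0` implies `m ∈ zM`. Then each of these maps is an isomorphism — multiplication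
by `zⁱ` induces an isomorphism `M/zM ≅ zⁱM/z^{i+1}M` for all `i < n`, so that
`gr^•(A) ⊗_k gr⁰(M) ≅ gr^•(M)` — and `M` is flat over `A`. -/
theorem stmt18 (k : Type*) [Field k] (n : ℕ) (hn : 1 ≤ n) (M : Type*) [AddCommGroup M]
    [Module (Polynomial k ⧸ Ideal.span {(X : Polynomial k) ^ n}) M]
    (hcomp : ∀ m : M,
      (Ideal.Quotient.mk (Ideal.span {(X : Polynomial k) ^ n}) X) ^ (n - 1) • m = 0 →
      ∃ m' : M, m = (Ideal.Quotient.mk (Ideal.span {(X : Polynomial k) ^ n}) X) • m') :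
    (∀ i < n, ∀ m : M,
      (∃ m' : M, (Ideal.Quotient.mk (Ideal.span {(X : Polynomial k) ^ n}) X) ^ i • m =
        (Ideal.Quotient.mk (Ideal.span {(X : Polynomial k) ^ n}) X) ^ (i + 1) • m') →
      ∃ m'' : M, m = (Ideal.Quotient.mk (Ideal.span {(X : Polynomial k) ^ n}) X) • m'') ∧
    Module.Flat (Polynomial k ⧸ Ideal.span {(X : Polynomial k) ^ n}) M :=
  stmt18_general k n M hcomp
end
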